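/- arXiv:2004.12947 — 4 statements merged into one kernel-verified Lean document; each statement's English description precedes it below -/
import Mathlib

section
/- Let γ ≥ 1, r, s ≥ 0, τ ∈ [1/2, 1], and t ≥ r + s·τ^{1/γ}. Then for all x, ω, y, η ∈ ℝ^d: exp((r+s)|(x,ω)|^{1/γ}) / exp(r|(y,η)|^{1/γ}) ≤ exp(s|((1−τ)x+τy, τω+(1−τ)η)|^{1/γ}) · exp(t|(ω−η, y−x)|^{1/γ}). -/
open Real

/-- Euclidean norm of a pair (a,b) ∈ ℝ^{2d}. -/
noncomputable def pairNorm {d : ℕ} (a b : EuclideanSpace ℝ (Fin d)) : ℝ :=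
  Real.sqrt (‖a‖ ^ 2 + ‖b‖ ^ 2)

/-- Subadditivity of `x ↦ x ^ p` for `0 ≤ p ≤ 1`. -/
lemma my_rpow_add_le (u v p : ℝ) (hu : 0 ≤ u) (hv : 0 ≤ v)
    (hp0 : 0 ≤ p) (hp1 : p ≤ 1) : (u + v) ^ p ≤ u ^ p + v ^ p := by
  have h := NNReal.rpow_add_le_add_rpow u.toNNReal v.toNNReal hp0 hp1
  calc (u + v) ^ p = ((u.toNNReal + v.toNNReal : NNReal) : ℝ) ^ p := by
        rw [← Real.toNNReal_add hu hv, Real.coe_toNNReal _ (by linarith)]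
    _ = (((u.toNNReal + v.toNNReal) ^ p : NNReal) : ℝ) := (NNReal.coe_rpow _ _).symm
    _ ≤ ((u.toNNReal ^ p + v.toNNReal ^ p : NNReal) : ℝ) := by exact_mod_cast h
    _ = u ^ p + v ^ p := by
        push_cast
        rw [Real.coe_toNNReal u hu, Real.coe_toNNReal v hv]

/-- Cauchy–Schwarz type inequality for square roots. -/
lemma sqrt_add_sq_le (c e f g : ℝ) :
    Real.sqrt ((c + f) ^ 2 + (e + g) ^ 2)
      ≤ Real.sqrt (c ^ 2 + e ^ 2) + Real.sqrt (f ^ 2 + g ^ 2) := by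
  set s1 := Real.sqrt (c ^ 2 + e ^ 2) with hs1
  set s2 := Real.sqrt (f ^ 2 + g ^ 2) with hs2
  have hs1n : 0 ≤ s1 := Real.sqrt_nonneg _
  have hs2n : 0 ≤ s2 := Real.sqrt_nonneg _
  have hs1sq : s1 ^ 2 = c ^ 2 + e ^ 2 := Real.sq_sqrt (by positivity)
  have hs2sq : s2 ^ 2 = f ^ 2 + g ^ 2 := Real.sq_sqrt (by positivity)
  have hcs : c * f + e * g ≤ s1 * s2 := by
    have h1 : (c * f + e * g) ^ 2 ≤ (s1 * s2) ^ 2 := by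
      have := sq_nonneg (c * g - e * f)
      nlinarith [sq_nonneg (c*g - e*f)]
    nlinarith [mul_nonneg hs1n hs2n, sq_nonneg (c * f + e * g - s1 * s2)]
  have : (c + f) ^ 2 + (e + g) ^ 2 ≤ (s1 + s2) ^ 2 := by nlinarith
  calc Real.sqrt ((c + f) ^ 2 + (e + g) ^ 2) ≤ Real.sqrt ((s1 + s2) ^ 2) :=
        Real.sqrt_le_sqrt this
    _ = s1 + s2 := Real.sqrt_sq (by positivity)

lemma sqrt_tri (a b c e f g : ℝ) (ha : 0 ≤ a) (hb : 0 ≤ b)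
    (h1 : a ≤ c + f) (h2 : b ≤ e + g) :
    Real.sqrt (a ^ 2 + b ^ 2)
      ≤ Real.sqrt (c ^ 2 + e ^ 2) + Real.sqrt (f ^ 2 + g ^ 2) := by
  have key : Real.sqrt (a ^ 2 + b ^ 2) ≤ Real.sqrt ((c + f) ^ 2 + (e + g) ^ 2) := by
    apply Real.sqrt_le_sqrt
    nlinarith
  exact key.trans (sqrt_add_sq_le c e f g)

/-- For γ ≥ 1, r, s ≥ 0, τ ∈ [1/2,1] and t ≥ r + s τ^{1/γ}, the weight estimate
    w^γ_{r+s}(x,ω)/w^γ_r(y,η)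
      ≤ w^γ_s((1−τ)x+τy, τω+(1−τ)η) · w^γ_t(ω−η, y−x) holds. -/
theorem weight_estimate_large_tau (d : ℕ) (γ r s τ t : ℝ)
    (hγ : 1 ≤ γ) (hr : 0 ≤ r) (hs : 0 ≤ s)
    (hτ0 : 1 / 2 ≤ τ) (hτ1 : τ ≤ 1)
    (ht : r + s * τ ^ (1 / γ) ≤ t)
    (x ω y η : EuclideanSpace ℝ (Fin d)) :
    Real.exp ((r + s) * pairNorm x ω ^ (1 / γ)) / Real.exp (r * pairNorm y η ^ (1 / γ))
      ≤ Real.exp (s * pairNorm ((1 - τ) • x + τ • y) (τ • ω + (1 - τ) • η) ^ (1 / γ))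
        * Real.exp (t * pairNorm (ω - η) (y - x) ^ (1 / γ)) := by
  have hτpos : 0 < τ := lt_of_lt_of_le (by norm_num) hτ0
  have hp0 : (0:ℝ) < 1 / γ := by positivity
  have hp1 : 1 / γ ≤ 1 := by
    rw [div_le_one (by linarith : (0:ℝ) < γ)]; exact hγ
  set p := 1 / γ with hp
  set X := pairNorm x ω with hX
  set Y := pairNorm y η with hY
  set M := pairNorm ((1 - τ) • x + τ • y) (τ • ω + (1 - τ) • η) with hM
  set D := pairNorm (ω - η) (y - x) with hD
  have hXn : 0 ≤ X := Real.sqrt_nonneg _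
  have hYn : 0 ≤ Y := Real.sqrt_nonneg _
  have hMn : 0 ≤ M := Real.sqrt_nonneg _
  have hDn : 0 ≤ D := Real.sqrt_nonneg _
  -- D with components swapped equals D, since pairNorm is symmetric up to reorder
  have hDalt : D = Real.sqrt (‖y - x‖ ^ 2 + ‖ω - η‖ ^ 2) := by
    rw [hD, pairNorm, add_comm]
  -- Fact 1 : X ≤ Y + D
  have fact1 : X ≤ Y + D := by
    rw [hX, hDalt, pairNorm, hY, pairNorm]
    apply sqrt_tri _ _ _ _ _ _ (norm_nonneg _) (norm_nonneg _)
    · have : x = y - (y - x) := by abel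
      calc ‖x‖ = ‖y - (y - x)‖ := by rw [← this]
        _ ≤ ‖y‖ + ‖y - x‖ := norm_sub_le _ _
    · have : ω = η + (ω - η) := by abel
      calc ‖ω‖ = ‖η + (ω - η)‖ := by rw [← this]
        _ ≤ ‖η‖ + ‖ω - η‖ := norm_add_le _ _
  -- Fact 2 : X ≤ M + τ * D
  have fact2 : X ≤ M + τ * D := by
    have step : X ≤ M + Real.sqrt ((τ * ‖y - x‖) ^ 2 + ((1 - τ) * ‖ω - η‖) ^ 2) := by
      rw [hX, pairNorm, hM, pairNorm]
      apply sqrt_tri _ _ _ _ _ _ (norm_nonneg _) (norm_nonneg _)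
      · have hxe : x = ((1 - τ) • x + τ • y) + τ • (x - y) := by
          rw [smul_sub]; module
        calc ‖x‖ = ‖((1 - τ) • x + τ • y) + τ • (x - y)‖ := by rw [← hxe]
          _ ≤ ‖(1 - τ) • x + τ • y‖ + ‖τ • (x - y)‖ := norm_add_le _ _
          _ = ‖(1 - τ) • x + τ • y‖ + τ * ‖y - x‖ := by
              rw [norm_smul, Real.norm_eq_abs, abs_of_pos hτpos, norm_sub_rev]
      · have hωe : ω = (τ • ω + (1 - τ) • η) + (1 - τ) • (ω - η) := by
          rw [smul_sub]; module
        calc ‖ω‖ = ‖(τ • ω + (1 - τ) • η) + (1 - τ) • (ω - η)‖ := by rw [← hωe]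
          _ ≤ ‖τ • ω + (1 - τ) • η‖ + ‖(1 - τ) • (ω - η)‖ := norm_add_le _ _
          _ = ‖τ • ω + (1 - τ) • η‖ + (1 - τ) * ‖ω - η‖ := by
              rw [norm_smul, Real.norm_eq_abs, abs_of_nonneg (by linarith)]
    have step2 : Real.sqrt ((τ * ‖y - x‖) ^ 2 + ((1 - τ) * ‖ω - η‖) ^ 2) ≤ τ * D := by
      have h1τ : (1 - τ) ^ 2 ≤ τ ^ 2 := by nlinarith
      have : (τ * ‖y - x‖) ^ 2 + ((1 - τ) * ‖ω - η‖) ^ 2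
          ≤ τ ^ 2 * (‖y - x‖ ^ 2 + ‖ω - η‖ ^ 2) := by nlinarith [sq_nonneg ‖ω - η‖]
      calc Real.sqrt ((τ * ‖y - x‖) ^ 2 + ((1 - τ) * ‖ω - η‖) ^ 2)
          ≤ Real.sqrt (τ ^ 2 * (‖y - x‖ ^ 2 + ‖ω - η‖ ^ 2)) := Real.sqrt_le_sqrt this
        _ = τ * Real.sqrt (‖y - x‖ ^ 2 + ‖ω - η‖ ^ 2) := by
            rw [Real.sqrt_mul (by positivity), Real.sqrt_sq hτpos.le]
        _ = τ * D := by rw [hDalt]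
    linarith
  -- rpow estimates
  have hrp1 : X ^ p ≤ Y ^ p + D ^ p :=
    calc X ^ p ≤ (Y + D) ^ p := Real.rpow_le_rpow hXn fact1 hp0.le
      _ ≤ Y ^ p + D ^ p := my_rpow_add_le Y D p hYn hDn hp0.le hp1
  have hrp2 : X ^ p ≤ M ^ p + τ ^ p * D ^ p :=
    calc X ^ p ≤ (M + τ * D) ^ p := Real.rpow_le_rpow hXn fact2 hp0.le
      _ ≤ M ^ p + (τ * D) ^ p := my_rpow_add_le M (τ * D) p hMn (by positivity) hp0.le hp1
      _ = M ^ p + τ ^ p * D ^ p := by rw [Real.mul_rpow hτpos.le hDn]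
  have hDp : 0 ≤ D ^ p := Real.rpow_nonneg hDn p
  have key : (r + s) * X ^ p ≤ r * Y ^ p + (s * M ^ p + t * D ^ p) := by
    have h1 : r * X ^ p ≤ r * (Y ^ p + D ^ p) := mul_le_mul_of_nonneg_left hrp1 hr
    have h2 : s * X ^ p ≤ s * (M ^ p + τ ^ p * D ^ p) := mul_le_mul_of_nonneg_left hrp2 hs
    have h3 : (r + s * τ ^ p) * D ^ p ≤ t * D ^ p := mul_le_mul_of_nonneg_right ht hDp
    nlinarith
  rw [div_le_iff₀ (Real.exp_pos _), ← Real.exp_add, ← Real.exp_add, Real.exp_le_exp]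
  linarith
end

section
/- Let γ ≥ 1, r, s ≥ 0, τ ∈ [0, 1/2), and t ≥ r + s(1+τ²)^{1/(2γ)}. Then for all x, ω, y, η ∈ ℝ^d: exp((r+s)|(x,ω)|^{1/γ}) ≤ exp(r|(y,η)|^{1/γ}) · exp(s|((1−τ)x+τy, τω+(1−τ)η)|^{1/γ}) · exp(t|(ω−η, y−x)|^{1/γ}). -/
/-! `pairNorm` is the `L²` product norm on `ℝ^d × ℝ^d`, so it satisfies the triangle inequality.
With `A, B, C, D` the four pair norms in the statement, `(x, ω)` is the sum of `(y, η)` and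
`(x - y, ω - η)`, and also of the interpolated point and `(τ(x - y), (1 - τ)(ω - η))`, whose pair
norm is at most `D` because `τ, 1 - τ ∈ [0, 1]`. Hence `A ≤ B + D` and `A ≤ C + D`. Since
`u ↦ u ^ (1/γ)` is subadditive for `γ ≥ 1`, this gives
`(r + s) A^{1/γ} ≤ r B^{1/γ} + s C^{1/γ} + (r + s) D^{1/γ}`, and `r + s ≤ t`. -/

open Real

lemma pairNorm_eq_norm_toLp {d : ℕ} (a b : EuclideanSpace ℝ (Fin d)) :
    pairNorm a b = ‖WithLp.toLp 2 (a, b)‖ := by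
  rw [WithLp.prod_norm_eq_of_L2]
  rfl

lemma pairNorm_nonneg {d : ℕ} (a b : EuclideanSpace ℝ (Fin d)) : 0 ≤ pairNorm a b :=
  Real.sqrt_nonneg _

lemma pairNorm_add_le {d : ℕ} (a b c e : EuclideanSpace ℝ (Fin d)) :
    pairNorm (a + c) (b + e) ≤ pairNorm a b + pairNorm c e := by
  simp only [pairNorm_eq_norm_toLp]
  exact norm_add_le (WithLp.toLp 2 (a, b)) (WithLp.toLp 2 (c, e))

lemma pairNorm_comm {d : ℕ} (a b : EuclideanSpace ℝ (Fin d)) : pairNorm a b = pairNorm b a := by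
  rw [pairNorm, pairNorm, add_comm]

lemma pairNorm_le_pairNorm {d : ℕ} {a b c e : EuclideanSpace ℝ (Fin d)} (hac : ‖a‖ ≤ ‖c‖)
    (hbe : ‖b‖ ≤ ‖e‖) : pairNorm a b ≤ pairNorm c e := by
  unfold pairNorm
  gcongr

lemma pairNorm_smul_le {d : ℕ} {α β : ℝ} (hα : |α| ≤ 1) (hβ : |β| ≤ 1)
    (a b : EuclideanSpace ℝ (Fin d)) : pairNorm (α • a) (β • b) ≤ pairNorm a b := by
  apply pairNorm_le_pairNorm <;> rw [norm_smul, Real.norm_eq_abs] <;>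
    exact mul_le_of_le_one_left (norm_nonneg _) ‹_›

lemma pairNorm_le_add_pairNorm_sub {d : ℕ} (x ω y η : EuclideanSpace ℝ (Fin d)) :
    pairNorm x ω ≤ pairNorm y η + pairNorm (x - y) (ω - η) := by
  simpa using pairNorm_add_le y η (x - y) (ω - η)

lemma pairNorm_le_interpolate_add_pairNorm_sub {d : ℕ} {τ : ℝ} (hτ0 : 0 ≤ τ) (hτ1 : τ ≤ 1)
    (x ω y η : EuclideanSpace ℝ (Fin d)) :
    pairNorm x ω ≤
      pairNorm ((1 - τ) • x + τ • y) (τ • ω + (1 - τ) • η) + pairNorm (x - y) (ω - η) := by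
  have hx : (1 - τ) • x + τ • y + τ • (x - y) = x := by module
  have hω : τ • ω + (1 - τ) • η + (1 - τ) • (ω - η) = ω := by module
  have hsplit := pairNorm_add_le ((1 - τ) • x + τ • y) (τ • ω + (1 - τ) • η)
    (τ • (x - y)) ((1 - τ) • (ω - η))
  rw [hx, hω] at hsplit
  refine hsplit.trans (add_le_add_right (pairNorm_smul_le ?_ ?_ _ _) _) <;>
    exact abs_le.2 ⟨by linarith, by linarith⟩

lemma rpow_le_rpow_add_rpow_of_le_add {a b c p : ℝ} (ha : 0 ≤ a) (hb : 0 ≤ b) (hc : 0 ≤ c)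
    (hp0 : 0 ≤ p) (hp1 : p ≤ 1) (habc : a ≤ b + c) : a ^ p ≤ b ^ p + c ^ p :=
  (Real.rpow_le_rpow ha habc hp0).trans (Real.rpow_add_le_add_rpow hb hc hp0 hp1)

/-- For γ ≥ 1, r, s ≥ 0, τ ∈ [0,1/2) and t ≥ r + s(1+τ²)^{1/(2γ)}:
    exp((r+s)|(x,ω)|^{1/γ}) ≤ exp(r|(y,η)|^{1/γ}) ·
    exp(s|((1−τ)x+τy, τω+(1−τ)η)|^{1/γ}) · exp(t|(ω−η, y−x)|^{1/γ}). -/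
theorem weight_estimate_small_tau (d : ℕ) (γ r s τ t : ℝ)
    (hγ : 1 ≤ γ) (hr : 0 ≤ r) (hs : 0 ≤ s)
    (hτ0 : 0 ≤ τ) (hτ1 : τ < 1 / 2)
    (ht : r + s * (1 + τ ^ 2) ^ (1 / (2 * γ)) ≤ t)
    (x ω y η : EuclideanSpace ℝ (Fin d)) :
    Real.exp ((r + s) * pairNorm x ω ^ (1 / γ))
      ≤ Real.exp (r * pairNorm y η ^ (1 / γ))
        * Real.exp (s * pairNorm ((1 - τ) • x + τ • y) (τ • ω + (1 - τ) • η) ^ (1 / γ))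
        * Real.exp (t * pairNorm (ω - η) (y - x) ^ (1 / γ)) := by
  have hp0 : 0 ≤ 1 / γ := by positivity
  have hp1 : 1 / γ ≤ 1 := (div_le_one (by linarith)).2 hγ
  have hD : pairNorm (ω - η) (y - x) = pairNorm (x - y) (ω - η) := by
    rw [pairNorm_comm, pairNorm, pairNorm, norm_sub_rev]
  rw [hD]
  have hAB := rpow_le_rpow_add_rpow_of_le_add (pairNorm_nonneg _ _) (pairNorm_nonneg _ _)
    (pairNorm_nonneg _ _) hp0 hp1 (pairNorm_le_add_pairNorm_sub x ω y η)
  have hAC := rpow_le_rpow_add_rpow_of_le_add (pairNorm_nonneg _ _) (pairNorm_nonneg _ _)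
    (pairNorm_nonneg _ _) hp0 hp1
    (pairNorm_le_interpolate_add_pairNorm_sub hτ0 (by linarith) x ω y η)
  have hst : r + s ≤ t := by
    have : 1 ≤ (1 + τ ^ 2) ^ (1 / (2 * γ)) := Real.one_le_rpow (le_add_of_nonneg_right (sq_nonneg τ)) (by positivity)
    linarith [mul_le_mul_of_nonneg_left this hs]
  have hDp : 0 ≤ pairNorm (x - y) (ω - η) ^ (1 / γ) := Real.rpow_nonneg (pairNorm_nonneg _ _) _
  rw [← Real.exp_add, ← Real.exp_add, Real.exp_le_exp]
  linarith [mul_le_mul_of_nonneg_left hAB hr, mul_le_mul_of_nonneg_left hAC hs,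
    mul_le_mul_of_nonneg_right hst hDp]
end

section
/- Let v be a submultiplicative weight on ℤ^d, m a v-moderate weight, and 0 < r < 1 with p = q = r. Then for a ∈ ℓ^r_m(ℤ^d) and b ∈ ℓ^r_v(ℤ^d), the convolution a∗b satisfies ‖a∗b‖_{ℓ^r_m} ≤ C ‖a‖_{ℓ^r_m} ‖b‖_{ℓ^r_v} for a constant C depending only on the moderateness constant. -/
/-! Since `x ↦ x ^ r` is subadditive for `r ≤ 1`, and moderateness gives
`m n ≤ C v (n - k) m k`, the `r`-th power of the weighted convolution at `n` is at most
`C ^ r ∑ₖ (‖a k‖ m k) ^ r (‖b (n - k)‖ v (n - k)) ^ r`. Summing over `n` factors the right-hand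
side into `C ^ r ‖a‖ ^ r ‖b‖ ^ r`. The inclusion `ℓ^r ⊆ ℓ^1` makes every series absolutely
convergent along the way. -/

namespace Real

theorem rpow_sum_le_sum_rpow {ι : Type*} (s : Finset ι) {u : ι → ℝ} (hu : ∀ i ∈ s, 0 ≤ u i)
    {r : ℝ} (hr0 : 0 < r) (hr1 : r ≤ 1) : (∑ i ∈ s, u i) ^ r ≤ ∑ i ∈ s, u i ^ r :=
  Finset.le_sum_of_subadditive_on_pred (· ^ r) (0 ≤ ·) (by simp [zero_rpow hr0.ne'])
    (fun x y hx hy =>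
      NNReal.coe_le_coe.2 (NNReal.rpow_add_le_add_rpow ⟨x, hx⟩ ⟨y, hy⟩ hr0.le hr1))
    (fun _ _ => add_nonneg) u hu

theorem rpow_tsum_le_tsum_rpow {ι : Type*} {u : ι → ℝ} (hu : ∀ i, 0 ≤ u i) {r : ℝ}
    (hr0 : 0 < r) (hr1 : r ≤ 1) (hsum : Summable u) (hsumr : Summable fun i => u i ^ r) :
    (∑' i, u i) ^ r ≤ ∑' i, u i ^ r :=
  le_of_tendsto (hsum.hasSum.rpow_const (Or.inr hr0.le)) <| .of_forall fun s =>
    (rpow_sum_le_sum_rpow s (fun i _ => hu i) hr0 hr1).trans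
      (hsumr.sum_le_tsum s fun i _ => rpow_nonneg (hu i) r)

end Real

theorem Summable.of_rpow_of_le_one {ι : Type*} {u : ι → ℝ} (hu : ∀ i, 0 ≤ u i) {r : ℝ}
    (hr0 : 0 < r) (hr1 : r ≤ 1) (hsumr : Summable fun i => u i ^ r) : Summable u := by
  have hr : (ENNReal.ofReal r).toReal = r := ENNReal.toReal_ofReal hr0.le
  have hmem : Memℓp u (ENNReal.ofReal r) :=
    (memℓp_gen_iff (by rwa [hr])).2 (by simpa [hr, Real.norm_eq_abs, abs_of_nonneg (hu _)])
  have h1 := (memℓp_gen_iff (by simp)).1 (hmem.of_exponent_ge (ENNReal.ofReal_le_one.2 hr1))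
  simpa [Real.norm_eq_abs, abs_of_nonneg (hu _)] using h1

section Convolution

variable {G : Type*} [AddGroup G] {f g : G → ℝ}

theorem hasSum_prod_mul_sub (hf₀ : ∀ k, 0 ≤ f k) (hg₀ : ∀ k, 0 ≤ g k) (hf : Summable f)
    (hg : Summable g) :
    HasSum (fun p : G × G => f p.2 * g (p.1 - p.2)) ((∑' k, f k) * ∑' k, g k) := by
  let e : G × G ≃ G × G :=
    (Equiv.prodComm G G).trans (Equiv.prodShear (Equiv.refl G) Equiv.subRight)
  have hprod : HasSum (fun q : G × G => f q.1 * g q.2) ((∑' k, f k) * ∑' k, g k) :=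
    hf.hasSum.mul hg.hasSum (hf.mul_of_nonneg hg hf₀ hg₀)
  exact e.hasSum_iff.2 hprod

theorem summable_mul_sub (hf₀ : ∀ k, 0 ≤ f k) (hg₀ : ∀ k, 0 ≤ g k) (hf : Summable f)
    (hg : Summable g) (n : G) : Summable fun k => f k * g (n - k) :=
  (hasSum_prod_mul_sub hf₀ hg₀ hf hg).summable.prod_factor n

theorem hasSum_tsum_mul_sub (hf₀ : ∀ k, 0 ≤ f k) (hg₀ : ∀ k, 0 ≤ g k) (hf : Summable f)
    (hg : Summable g) :
    HasSum (fun n => ∑' k, f k * g (n - k)) ((∑' k, f k) * ∑' k, g k) :=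
  (hasSum_prod_mul_sub hf₀ hg₀ hf hg).prod_fiberwise fun n =>
    (summable_mul_sub hf₀ hg₀ hf hg n).hasSum

end Convolution

section WeightedConvolution

variable {G R : Type*} [AddGroup G] [SeminormedRing R] {m v : G → ℝ} {C : ℝ}

theorem norm_mul_sub_mul_le (hm : ∀ k, 0 ≤ m k) (hmod : ∀ k n, m (k + n) ≤ C * v k * m n)
    (a b : G → R) (n k : G) :
    ‖a k * b (n - k)‖ * m n ≤ C * (‖a k‖ * m k) * (‖b (n - k)‖ * v (n - k)) := by
  have hmn : m n ≤ C * v (n - k) * m k := by simpa using hmod (n - k) k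
  calc ‖a k * b (n - k)‖ * m n ≤ ‖a k‖ * ‖b (n - k)‖ * m n := by
        gcongr
        exacts [hm n, norm_mul_le _ _]
    _ ≤ ‖a k‖ * ‖b (n - k)‖ * (C * v (n - k) * m k) := by gcongr
    _ = C * (‖a k‖ * m k) * (‖b (n - k)‖ * v (n - k)) := by ring

theorem rpow_norm_mul_sub_mul_le (hm : ∀ k, 0 ≤ m k) (hv : ∀ k, 0 ≤ v k) (hC : 0 ≤ C)
    (hmod : ∀ k n, m (k + n) ≤ C * v k * m n) (a b : G → R) {r : ℝ} (hr : 0 ≤ r) (n k : G) :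
    (‖a k * b (n - k)‖ * m n) ^ r
      ≤ C ^ r * ((‖a k‖ * m k) ^ r * (‖b (n - k)‖ * v (n - k)) ^ r) := by
  have ha : 0 ≤ ‖a k‖ * m k := mul_nonneg (norm_nonneg _) (hm k)
  have hb : 0 ≤ ‖b (n - k)‖ * v (n - k) := mul_nonneg (norm_nonneg _) (hv _)
  calc (‖a k * b (n - k)‖ * m n) ^ r
      ≤ (C * (‖a k‖ * m k) * (‖b (n - k)‖ * v (n - k))) ^ r :=
        Real.rpow_le_rpow (mul_nonneg (norm_nonneg _) (hm n))
          (norm_mul_sub_mul_le hm hmod a b n k) hr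
    _ = C ^ r * ((‖a k‖ * m k) ^ r * (‖b (n - k)‖ * v (n - k)) ^ r) := by
        rw [Real.mul_rpow (mul_nonneg hC ha) hb, Real.mul_rpow hC ha, mul_assoc]

theorem rpow_norm_tsum_mul_sub_le (hm : ∀ k, 0 < m k) (hv : ∀ k, 0 ≤ v k) (hC : 0 ≤ C)
    (hmod : ∀ k n, m (k + n) ≤ C * v k * m n) {r : ℝ} (hr0 : 0 < r) (hr1 : r ≤ 1) {a b : G → R}
    (ha : Summable fun k => (‖a k‖ * m k) ^ r) (hb : Summable fun k => (‖b k‖ * v k) ^ r)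
    (n : G) :
    (‖∑' k, a k * b (n - k)‖ * m n) ^ r
      ≤ C ^ r * ∑' k, (‖a k‖ * m k) ^ r * (‖b (n - k)‖ * v (n - k)) ^ r := by
  have hfiber := summable_mul_sub
    (fun k => Real.rpow_nonneg (mul_nonneg (norm_nonneg (a k)) (hm k).le) r)
    (fun k => Real.rpow_nonneg (mul_nonneg (norm_nonneg (b k)) (hv k)) r) ha hb n
  have hterm := rpow_norm_mul_sub_mul_le (fun k => (hm k).le) hv hC hmod a b hr0.le n
  have hu : ∀ k, 0 ≤ ‖a k * b (n - k)‖ * m n := fun k => mul_nonneg (norm_nonneg _) (hm n).le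
  have hsumr : Summable fun k => (‖a k * b (n - k)‖ * m n) ^ r :=
    .of_nonneg_of_le (fun k => Real.rpow_nonneg (hu k) r) hterm (hfiber.mul_left _)
  have hsum : Summable fun k => ‖a k * b (n - k)‖ * m n :=
    hsumr.of_rpow_of_le_one hu hr0 hr1
  have hnorm : ‖∑' k, a k * b (n - k)‖ * m n ≤ ∑' k, ‖a k * b (n - k)‖ * m n := by
    rw [tsum_mul_right]
    gcongr
    · exact (hm n).le
    · exact norm_tsum_le_tsum_norm ((summable_mul_right_iff (hm n).ne').1 hsum)
  calc (‖∑' k, a k * b (n - k)‖ * m n) ^ r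
      ≤ (∑' k, ‖a k * b (n - k)‖ * m n) ^ r :=
        Real.rpow_le_rpow (mul_nonneg (norm_nonneg _) (hm n).le) hnorm hr0.le
    _ ≤ ∑' k, (‖a k * b (n - k)‖ * m n) ^ r := Real.rpow_tsum_le_tsum_rpow hu hr0 hr1 hsum hsumr
    _ ≤ ∑' k, C ^ r * ((‖a k‖ * m k) ^ r * (‖b (n - k)‖ * v (n - k)) ^ r) :=
        hsumr.tsum_le_tsum hterm (hfiber.mul_left _)
    _ = C ^ r * ∑' k, (‖a k‖ * m k) ^ r * (‖b (n - k)‖ * v (n - k)) ^ r := tsum_mul_left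

end WeightedConvolution

theorem young_convolution_quasibanach_general (d : ℕ) (r : ℝ) (hr0 : 0 < r) (hr1 : r < 1)
    (m v : (Fin d → ℤ) → ℝ) (hm_pos : ∀ k, 0 < m k) (hv_pos : ∀ k, 0 < v k)
    (C : ℝ) (hC : 0 < C)
    (hmod : ∀ k n, m (k + n) ≤ C * v k * m n)
    (a b : (Fin d → ℤ) → ℂ)
    (ha : Summable fun k => (‖a k‖ * m k) ^ r)
    (hb : Summable fun k => (‖b k‖ * v k) ^ r) :
    (Summable fun n => (‖∑' k, a k * b (n - k)‖ * m n) ^ r) ∧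
    (∑' n, (‖∑' k, a k * b (n - k)‖ * m n) ^ r) ^ (1 / r)
      ≤ C * (∑' k, (‖a k‖ * m k) ^ r) ^ (1 / r)
          * (∑' k, (‖b k‖ * v k) ^ r) ^ (1 / r) := by
  have hF : ∀ k, 0 ≤ (‖a k‖ * m k) ^ r := fun k => by have := hm_pos k; positivity
  have hG : ∀ k, 0 ≤ (‖b k‖ * v k) ^ r := fun k => by have := hv_pos k; positivity
  have hA : 0 ≤ ∑' k, (‖a k‖ * m k) ^ r := tsum_nonneg hF
  have hB : 0 ≤ ∑' k, (‖b k‖ * v k) ^ r := tsum_nonneg hG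
  have hconv := hasSum_tsum_mul_sub hF hG ha hb
  have hbound :=
    rpow_norm_tsum_mul_sub_le hm_pos (fun k => (hv_pos k).le) hC.le hmod hr0 hr1.le ha hb
  have hsum : Summable fun n => (‖∑' k, a k * b (n - k)‖ * m n) ^ r :=
    .of_nonneg_of_le (fun n => by have := hm_pos n; positivity) hbound (hconv.summable.mul_left _)
  refine ⟨hsum, ?_⟩
  calc (∑' n, (‖∑' k, a k * b (n - k)‖ * m n) ^ r) ^ (1 / r)
      ≤ (C ^ r * ((∑' k, (‖a k‖ * m k) ^ r) * ∑' k, (‖b k‖ * v k) ^ r)) ^ (1 / r) := by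
        gcongr
        · exact tsum_nonneg fun n => by have := hm_pos n; positivity
        · rw [← hconv.tsum_eq, ← tsum_mul_left]
          exact hsum.tsum_le_tsum hbound (hconv.summable.mul_left _)
    _ = C * (∑' k, (‖a k‖ * m k) ^ r) ^ (1 / r) * (∑' k, (‖b k‖ * v k) ^ r) ^ (1 / r) := by
        rw [Real.mul_rpow (by positivity) (mul_nonneg hA hB), Real.mul_rpow hA hB,
          ← Real.rpow_mul hC.le, mul_one_div_cancel hr0.ne', Real.rpow_one, mul_assoc]

/-- Young convolution inequality for 0 < r < 1 on ℤ^d: if v is a submultiplicative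
    weight, m is v-moderate with constant C, a ∈ ℓ^r_m and b ∈ ℓ^r_v, then the
    convolution (a∗b)(n) = ∑_k a(k) b(n−k) belongs to ℓ^r_m with
    ‖a∗b‖_{ℓ^r_m} ≤ C ‖a‖_{ℓ^r_m} ‖b‖_{ℓ^r_v}. -/
theorem young_convolution_quasibanach (d : ℕ) (r : ℝ) (hr0 : 0 < r) (hr1 : r < 1)
    (m v : (Fin d → ℤ) → ℝ) (hm_pos : ∀ k, 0 < m k) (hv_pos : ∀ k, 0 < v k)
    (hv_submult : ∀ k n, v (k + n) ≤ v k * v n)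
    (C : ℝ) (hC : 0 < C)
    (hmod : ∀ k n, m (k + n) ≤ C * v k * m n)
    (a b : (Fin d → ℤ) → ℂ)
    (ha : Summable fun k => (‖a k‖ * m k) ^ r)
    (hb : Summable fun k => (‖b k‖ * v k) ^ r)
    (hconv : ∀ n, Summable fun k => a k * b (n - k)) :
    (Summable fun n => (‖∑' k, a k * b (n - k)‖ * m n) ^ r) ∧
    (∑' n, (‖∑' k, a k * b (n - k)‖ * m n) ^ r) ^ (1 / r)
      ≤ C * (∑' k, (‖a k‖ * m k) ^ r) ^ (1 / r)
          * (∑' k, (‖b k‖ * v k) ^ r) ^ (1 / r) :=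
  young_convolution_quasibanach_general d r hr0 hr1 m v hm_pos hv_pos C hC hmod a b ha hb
end

section
/- Let τ ∈ (0,1) and define A_τ g(t) := g(((τ−1)/τ) t) for g : ℝ^d → ℂ. For f, g Schwartz functions on ℝ^d, the cross-τ-Wigner distribution W_τ(f,g)(x,ω) := ∫_{ℝ^d} e^{−2πi t·ω} f(x+τt) \overline{g(x−(1−τ)t)} dt satisfies W_τ(f,g)(x,ω) = τ^{−d} e^{2πi (1/τ) ω·x} V_{A_τ g} f(x/(1−τ), ω/τ), where V_h f(x,ω) := ∫ f(t) \overline{h(t−x)} e^{−2πi t·ω} dt is the short-time Fourier transform. -/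
open MeasureTheory Real Complex
open scoped RealInnerProductSpace

noncomputable section

variable {d : ℕ}

/-- The short-time Fourier transform of f with respect to window h:
    V_h f(x,ω) = ∫ f(t) conj(h(t−x)) e^{−2πi t·ω} dt. -/
def STFT (h f : EuclideanSpace ℝ (Fin d) → ℂ) (x ω : EuclideanSpace ℝ (Fin d)) : ℂ :=
  ∫ t : EuclideanSpace ℝ (Fin d),
    f t * (starRingEnd ℂ) (h (t - x)) * Complex.exp (-2 * π * Complex.I * (⟪t, ω⟫ : ℝ))

/-- The cross-τ-Wigner distribution
    W_τ(f,g)(x,ω) = ∫ e^{−2πi t·ω} f(x+τt) conj(g(x−(1−τ)t)) dt. -/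
def crossWigner (τ : ℝ) (f g : EuclideanSpace ℝ (Fin d) → ℂ)
    (x ω : EuclideanSpace ℝ (Fin d)) : ℂ :=
  ∫ t : EuclideanSpace ℝ (Fin d),
    Complex.exp (-2 * π * Complex.I * (⟪t, ω⟫ : ℝ)) * f (x + τ • t)
      * (starRingEnd ℂ) (g (x - (1 - τ) • t))

/-- The dilation A_τ g(t) = g(((τ−1)/τ) t). -/
def dilA (τ : ℝ) (g : EuclideanSpace ℝ (Fin d) → ℂ) :
    EuclideanSpace ℝ (Fin d) → ℂ :=
  fun t => g (((τ - 1) / τ) • t)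

/-! The substitution `t ↦ x + τ t` in the integral defining `V_{A_τ g} f(x/(1-τ), ω/τ)` has
Jacobian `τ^d`; it turns the window argument `((τ-1)/τ)(x + τ t - x/(1-τ))` into `x - (1-τ) t`
and splits the phase `⟪x + τ t, ω/τ⟫` as `⟪ω, x⟫/τ + ⟪t, ω⟫`, leaving the Wigner integrand
times a constant phase. -/

theorem integral_comp_add_smul_of_pos {E F : Type*} [NormedAddCommGroup E] [NormedSpace ℝ E]
    [FiniteDimensional ℝ E] [MeasurableSpace E] [BorelSpace E] [NormedAddCommGroup F]
    [NormedSpace ℝ F] (μ : Measure E) [μ.IsAddHaarMeasure] (h : E → F) (x : E) {c : ℝ}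
    (hc : 0 < c) :
    ∫ t, h (x + c • t) ∂μ = (c ^ Module.finrank ℝ E)⁻¹ • ∫ s, h s ∂μ := by
  rw [Measure.integral_comp_smul μ (fun s => h (x + s)) c, integral_add_left_eq_self,
    abs_of_pos (inv_pos.2 (pow_pos hc _))]

theorem dilA_add_smul_sub_smul {τ : ℝ} (hτ0 : τ ≠ 0) (hτ1 : τ ≠ 1)
    (g : EuclideanSpace ℝ (Fin d) → ℂ) (x t : EuclideanSpace ℝ (Fin d)) :
    dilA τ g (x + τ • t - (1 / (1 - τ)) • x) = g (x - (1 - τ) • t) := by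
  have h1τ : 1 - τ ≠ 0 := sub_ne_zero.2 hτ1.symm
  unfold dilA
  congr 1
  match_scalars <;> field_simp <;> ring

theorem inner_add_smul_one_div_smul {E : Type*} [NormedAddCommGroup E] [InnerProductSpace ℝ E]
    {τ : ℝ} (hτ : τ ≠ 0) (x t ω : E) :
    ⟪x + τ • t, (1 / τ) • ω⟫ = (1 / τ) * ⟪ω, x⟫ + ⟪t, ω⟫ := by
  rw [inner_add_left, real_inner_smul_right, real_inner_smul_left, real_inner_smul_right,
    real_inner_comm x ω]
  field_simp

theorem STFT_integrand_comp_add_smul {τ : ℝ} (hτ0 : τ ≠ 0) (hτ1 : τ ≠ 1)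
    (f g : EuclideanSpace ℝ (Fin d) → ℂ) (x t ω : EuclideanSpace ℝ (Fin d)) :
    f (x + τ • t) * (starRingEnd ℂ) (dilA τ g (x + τ • t - (1 / (1 - τ)) • x))
        * Complex.exp (-2 * π * Complex.I * (⟪x + τ • t, (1 / τ) • ω⟫ : ℝ))
      = Complex.exp (-2 * π * Complex.I * ((1 / τ) * (⟪ω, x⟫ : ℝ) : ℝ))
        * (Complex.exp (-2 * π * Complex.I * (⟪t, ω⟫ : ℝ)) * f (x + τ • t)
          * (starRingEnd ℂ) (g (x - (1 - τ) • t))) := by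
  rw [dilA_add_smul_sub_smul hτ0 hτ1, inner_add_smul_one_div_smul hτ0, ofReal_add, mul_add,
    Complex.exp_add]
  ring

theorem STFT_dilA_eq_crossWigner {τ : ℝ} (hτ0 : 0 < τ) (hτ1 : τ ≠ 1)
    (f g : EuclideanSpace ℝ (Fin d) → ℂ) (x ω : EuclideanSpace ℝ (Fin d)) :
    STFT (dilA τ g) f ((1 / (1 - τ)) • x) ((1 / τ) • ω)
      = (τ : ℂ) ^ d * Complex.exp (-2 * π * Complex.I * ((1 / τ) * (⟪ω, x⟫ : ℝ) : ℝ))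
        * crossWigner τ f g x ω := by
  have hτd : (τ : ℂ) ^ d ≠ 0 := pow_ne_zero _ (ofReal_ne_zero.2 hτ0.ne')
  have hscale := integral_comp_add_smul_of_pos volume
    (fun s => f s * (starRingEnd ℂ) (dilA τ g (s - (1 / (1 - τ)) • x))
      * Complex.exp (-2 * π * Complex.I * (⟪s, (1 / τ) • ω⟫ : ℝ))) x hτ0
  simp only [STFT_integrand_comp_add_smul hτ0.ne' hτ1, integral_const_mul,
    finrank_euclideanSpace_fin, Complex.real_smul, ofReal_inv, ofReal_pow] at hscale
  rw [STFT, crossWigner, mul_assoc ((τ : ℂ) ^ d), hscale, ← mul_assoc, mul_inv_cancel₀ hτd,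
    one_mul]

/-- For τ ∈ (0,1) and Schwartz functions f, g:
    W_τ(f,g)(x,ω) = τ^{−d} e^{2πi (1/τ) ω·x} V_{A_τ g} f(x/(1−τ), ω/τ). -/
theorem crossWigner_eq_STFT (τ : ℝ) (hτ0 : 0 < τ) (hτ1 : τ < 1)
    (f g : SchwartzMap (EuclideanSpace ℝ (Fin d)) ℂ)
    (x ω : EuclideanSpace ℝ (Fin d)) :
    crossWigner τ f g x ω
      = ((τ : ℂ) ^ d)⁻¹
        * Complex.exp (2 * π * Complex.I * ((1 / τ) * (⟪ω, x⟫ : ℝ) : ℝ))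
        * STFT (dilA τ g) f ((1 / (1 - τ)) • x) ((1 / τ) • ω) := by
  have hphase : Complex.exp (-2 * π * Complex.I * ((1 / τ) * (⟪ω, x⟫ : ℝ) : ℝ))
      = (Complex.exp (2 * π * Complex.I * ((1 / τ) * (⟪ω, x⟫ : ℝ) : ℝ)))⁻¹ := by
    rw [← Complex.exp_neg, neg_mul, neg_mul, neg_mul]
  rw [STFT_dilA_eq_crossWigner hτ0 hτ1.ne f g x ω, hphase]
  field_simp [ofReal_ne_zero.2 hτ0.ne']

end
end
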